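/- Let n be a positive integer, let G be any simple graph on vertex set {1,…,n}, let p ∈ (0,1), k > 0, and let D_V be a positive integer. For S ⊆ {1,…,n} define the pseudo-calibrated value Λ_S(G) = Σ_R (k/n)^{|V(R) ∪ S|} · ( −√(p/(1−p)) )^{|R|} · ∏_{e∈R} χ_e(G), where the sum ranges over all sets R of potential edges on {1,…,n} such that every connected component of the graph with vertex set V(R) and edge set R contains a vertex of S, and |V(R) ∪ S| ≤ D_V; here V(R) is the set of endpoints of edges of R. If S is not an independent set in G (i.e., some edge of G has both endpoints in S), then Λ_S(G) = 0. -/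
import Mathlib


open scoped Classical

noncomputable section

namespace GM

/-- A graph on vertex set `Fin n`, given as a finite set of (potential) edges. -/
abbrev Graph (n : ℕ) := Finset (Sym2 (Fin n))

/-- The edge set contains no self-loops. -/
def IsSimpleG {n : ℕ} (G : Graph n) : Prop := ∀ e ∈ G, ¬ e.IsDiag

/-- Degree of a vertex. -/
def degree {n : ℕ} (G : Graph n) (v : Fin n) : ℕ := (G.filter (fun e => v ∈ e)).card

/-- The set of simple `d`-regular graphs on `n` vertices. -/
def regularGraphs (n d : ℕ) : Finset (Graph n) :=
  Finset.univ.filter (fun G => IsSimpleG G ∧ ∀ v, degree G v = d)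

/-- Expectation of `f` under the uniform distribution on `d`-regular graphs. -/
def regExp (n d : ℕ) (f : Graph n → ℝ) : ℝ :=
  (∑ G ∈ regularGraphs n d, f G) / (regularGraphs n d).card

/-- Probability of `P` under the uniform distribution on `d`-regular graphs. -/
def regPr (n d : ℕ) (P : Graph n → Prop) : ℝ :=
  (((regularGraphs n d).filter P).card : ℝ) / (regularGraphs n d).card

/-- The `p`-biased edge character. -/
def char {n : ℕ} (p : ℝ) (G : Graph n) (e : Sym2 (Fin n)) : ℝ :=
  if e ∈ G then Real.sqrt ((1 - p) / p) else - Real.sqrt (p / (1 - p))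

/-- A shape: a simple graph on `Fin m` with ordered tuples of distinct boundary vertices. -/
structure Shape where
  m : ℕ
  edges : Finset (Sym2 (Fin m))
  simple : ∀ e ∈ edges, ¬ e.IsDiag
  a : ℕ
  b : ℕ
  U : Fin a → Fin m
  V : Fin b → Fin m
  injU : Function.Injective U
  injV : Function.Injective V

/-- The simple graph underlying a shape. -/
def Shape.graph (τ : Shape) : SimpleGraph (Fin τ.m) :=
  SimpleGraph.fromEdgeSet (τ.edges : Set (Sym2 (Fin τ.m)))

/-- The boundary vertices of a shape. -/
def Shape.boundary (τ : Shape) : Finset (Fin τ.m) :=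
  Finset.univ.image τ.U ∪ Finset.univ.image τ.V

/-- The graph matrix of a shape, evaluated on a graph `G` with `p`-biased characters. -/
def graphMatrix (τ : Shape) (n : ℕ) (p : ℝ) (G : Graph n) :
    Matrix (Fin τ.a → Fin n) (Fin τ.b → Fin n) ℝ :=
  Matrix.of fun A B =>
    ∑ ψ ∈ Finset.univ.filter (fun ψ : Fin τ.m → Fin n =>
        Function.Injective ψ ∧ (∀ i, ψ (τ.U i) = A i) ∧ (∀ j, ψ (τ.V j) = B j)),
      ∏ e ∈ τ.edges, char p G (e.map ψ)

/-- `S` is a vertex separator of the shape `τ`: every path from the left boundary to the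
right boundary contains a vertex of `S`. -/
def IsSeparator (τ : Shape) (S : Finset (Fin τ.m)) : Prop :=
  ∀ (i : Fin τ.a) (j : Fin τ.b) (w : τ.graph.Walk (τ.U i) (τ.V j)),
    w.IsPath → ∃ v ∈ w.support, v ∈ S

/-- The set of edges of `τ` with both endpoints in `S`. -/
def edgesIn (τ : Shape) (S : Finset (Fin τ.m)) : Finset (Sym2 (Fin τ.m)) :=
  τ.edges.filter (fun e => ∀ v ∈ e, v ∈ S)

/-- Isolated vertices: vertices outside the boundary incident to no edge. -/
def isolatedVerts (τ : Shape) : Finset (Fin τ.m) :=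
  Finset.univ.filter (fun v => v ∉ τ.boundary ∧ ∀ e ∈ τ.edges, v ∉ e)

/-- `C` is the vertex set of a connected component of `τ`. -/
def IsComponent (τ : Shape) (C : Finset (Fin τ.m)) : Prop :=
  ∃ v, C = Finset.univ.filter (fun w => τ.graph.Reachable v w)

/-- `C` is a floating component of `τ`: an edge-induced connected component with no path
to the boundary. -/
def IsFloating (τ : Shape) (C : Finset (Fin τ.m)) : Prop :=
  IsComponent τ C ∧ (∃ e ∈ τ.edges, ∀ v ∈ e, v ∈ C) ∧
    ∀ v ∈ C, ∀ w ∈ τ.boundary, ¬ τ.graph.Reachable v w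

/-- A component is tree-like if `|V(C)| = |E(C)| + 1`. -/
def TreeLike (τ : Shape) (C : Finset (Fin τ.m)) : Prop :=
  C.card = (edgesIn τ C).card + 1

/-- The number of tree-like floating components of `τ` having no path to `S`. -/
def floatTreeCount (τ : Shape) (S : Finset (Fin τ.m)) : ℕ :=
  (Finset.univ.filter (fun C : Finset (Fin τ.m) =>
    IsFloating τ C ∧ TreeLike τ C ∧ ∀ v ∈ C, ∀ s ∈ S, ¬ τ.graph.Reachable v s)).card

/-- The block-value bound `B_q(τ)` (version with floating-component factor). -/
def Bq (τ : Shape) (n q : ℕ) (p cnorm : ℝ) : ℝ :=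
  sSup { x : ℝ | ∃ S : Finset (Fin τ.m), IsSeparator τ S ∧
    x = (Real.sqrt n * q) ^ (Finset.univ \ S).card
        * Real.sqrt ((1 - p) / p) ^ (edgesIn τ S).card
        * Real.sqrt n ^ (isolatedVerts τ).card
        * Real.sqrt n ^ floatTreeCount τ S
        * cnorm ^ τ.edges.card }

/-- The block-value bound `B_q(τ)` (version without floating-component factor). -/
def Bq0 (τ : Shape) (n q : ℕ) (p cnorm : ℝ) : ℝ :=
  sSup { x : ℝ | ∃ S : Finset (Fin τ.m), IsSeparator τ S ∧
    x = (Real.sqrt n * q) ^ (Finset.univ \ S).card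
        * Real.sqrt ((1 - p) / p) ^ (edgesIn τ S).card
        * Real.sqrt n ^ (isolatedVerts τ).card
        * cnorm ^ τ.edges.card }

/-- The spectral norm (ℓ₂→ℓ₂ operator norm) of a rectangular real matrix. -/
def specNorm {α β : Type*} [Fintype α] [Fintype β] [DecidableEq α] [DecidableEq β]
    (M : Matrix α β ℝ) : ℝ :=
  ‖LinearMap.toContinuousLinearMap (Matrix.toEuclideanLin M)‖

end GM

namespace GM

/-- `S` is an independent set in `G`: no edge of `G` has both endpoints in `S`. -/
def IsIndep {n : ℕ} (G : Graph n) (S : Finset (Fin n)) : Prop :=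
  ∀ e ∈ G, ∃ v ∈ e, v ∉ S

/-- The set of endpoints of the edges in `R`. -/
def vertsOf {n : ℕ} (R : Finset (Sym2 (Fin n))) : Finset (Fin n) :=
  Finset.univ.filter (fun v => ∃ e ∈ R, v ∈ e)

/-- Every connected component of the graph `(V(R), R)` contains a vertex of `S`. -/
def ConnectedToS {n : ℕ} (R : Finset (Sym2 (Fin n))) (S : Finset (Fin n)) : Prop :=
  ∀ v ∈ vertsOf R, ∃ s ∈ S,
    (SimpleGraph.fromEdgeSet (R : Set (Sym2 (Fin n)))).Reachable v s

/-- The pseudo-calibrated value `Λ_S(G)` with connected truncation at parameter `DV`. -/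
def Lam (n : ℕ) (p k : ℝ) (DV : ℕ) (G : Graph n) (S : Finset (Fin n)) : ℝ :=
  ∑ R ∈ Finset.univ.filter (fun R : Finset (Sym2 (Fin n)) =>
      (∀ e ∈ R, ¬ e.IsDiag) ∧ ConnectedToS R S ∧ (vertsOf R ∪ S).card ≤ DV),
    (k / n) ^ (vertsOf R ∪ S).card * (- Real.sqrt (p / (1 - p))) ^ R.card *
      ∏ e ∈ R, char p G e

end GM

namespace GM

variable {n : ℕ}

lemma vertsOf_mono {R R' : Finset (Sym2 (Fin n))} (h : R ⊆ R') : vertsOf R ⊆ vertsOf R' := by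
  intro v hv
  simp only [vertsOf, Finset.mem_filter, Finset.mem_univ, true_and] at hv ⊢
  obtain ⟨e, he, hve⟩ := hv
  exact ⟨e, h he, hve⟩

lemma vertsOf_insert_union (e₀ : Sym2 (Fin n)) (R : Finset (Sym2 (Fin n)))
    (S : Finset (Fin n)) (h : ∀ v ∈ e₀, v ∈ S) :
    vertsOf (insert e₀ R) ∪ S = vertsOf R ∪ S := by
  ext v
  simp only [Finset.mem_union, vertsOf, Finset.mem_filter, Finset.mem_univ, true_and,
    Finset.mem_insert]
  constructor
  · rintro (⟨e, (rfl | he), hv⟩ | hv)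
    · exact Or.inr (h v hv)
    · exact Or.inl ⟨e, he, hv⟩
    · exact Or.inr hv
  · rintro (⟨e, he, hv⟩ | hv)
    · exact Or.inl ⟨e, Or.inr he, hv⟩
    · exact Or.inr hv

lemma reach_cases {R : Finset (Sym2 (Fin n))} {x y v s : Fin n}
    (w : (SimpleGraph.fromEdgeSet (↑R : Set (Sym2 (Fin n)))).Walk v s) :
    (SimpleGraph.fromEdgeSet (↑(R.erase s(x, y)) : Set (Sym2 (Fin n)))).Reachable v s ∨
    (SimpleGraph.fromEdgeSet (↑(R.erase s(x, y)) : Set (Sym2 (Fin n)))).Reachable v x ∨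
    (SimpleGraph.fromEdgeSet (↑(R.erase s(x, y)) : Set (Sym2 (Fin n)))).Reachable v y := by
  induction w with
  | nil => exact Or.inl (SimpleGraph.Reachable.refl _)
  | @cons a b c h w ih =>
    by_cases hc : s(a, b) = s(x, y)
    · rcases Sym2.eq_iff.mp hc with ⟨rfl, rfl⟩ | ⟨rfl, rfl⟩
      · exact Or.inr (Or.inl (SimpleGraph.Reachable.refl _))
      · exact Or.inr (Or.inr (SimpleGraph.Reachable.refl _))
    · have hadj : (SimpleGraph.fromEdgeSet (↑(R.erase s(x, y)) : Set (Sym2 (Fin n)))).Adj a b := by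
        rw [SimpleGraph.fromEdgeSet_adj] at h ⊢
        refine ⟨?_, h.2⟩
        simp only [Finset.coe_erase, Set.mem_diff, Set.mem_singleton_iff]
        exact ⟨h.1, hc⟩
      rcases ih with h' | h' | h'
      · exact Or.inl (hadj.reachable.trans h')
      · exact Or.inr (Or.inl (hadj.reachable.trans h'))
      · exact Or.inr (Or.inr (hadj.reachable.trans h'))

end GM

open GM in
/-- If `S` is not an independent set in `G`, the pseudo-calibrated value `Λ_S(G)`
vanishes. -/
theorem Lam_eq_zero_of_not_indep (n : ℕ) (hn : 0 < n) (G : Graph n) (hG : IsSimpleG G)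
    (p k : ℝ) (hp : 0 < p) (hp1 : p < 1) (hk : 0 < k) (DV : ℕ) (hDV : 0 < DV)
    (S : Finset (Fin n)) (hS : ¬ IsIndep G S) :
    Lam n p k DV G S = 0 := by
  classical
  -- extract a bad edge e₀ ∈ G with both endpoints in S
  simp only [IsIndep, not_forall] at hS
  obtain ⟨e₀, he₀G, hbad⟩ := hS
  push_neg at hbad
  -- hbad : ∀ v ∈ e₀, v ∈ S
  induction e₀ using Sym2.ind with
  | _ x y =>
  have hxy : x ≠ y := by
    intro h
    exact hG _ he₀G (by simp [h, Sym2.isDiag_iff_proj_eq])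
  have hxS : x ∈ S := hbad x (by simp)
  have hyS : y ∈ S := hbad y (by simp)
  set e₀ : Sym2 (Fin n) := s(x, y) with he₀
  set f : Finset (Sym2 (Fin n)) → ℝ := fun R =>
    (k / n) ^ (vertsOf R ∪ S).card * (- Real.sqrt (p / (1 - p))) ^ R.card *
      ∏ e ∈ R, char p G e with hf
  have hchar : char p G e₀ = Real.sqrt ((1 - p) / p) := by
    simp [char, he₀G]
  have h1p : (0:ℝ) < 1 - p := by linarith
  have hsq : Real.sqrt (p / (1 - p)) * Real.sqrt ((1 - p) / p) = 1 := by
    rw [← Real.sqrt_mul (div_nonneg hp.le h1p.le)]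
    rw [show p / (1 - p) * ((1 - p) / p) = 1 by field_simp]
    exact Real.sqrt_one
  -- the key sign-flip identity
  have key : ∀ R : Finset (Sym2 (Fin n)), e₀ ∉ R → f (insert e₀ R) = - f R := by
    intro R hR
    have hv : vertsOf (insert e₀ R) ∪ S = vertsOf R ∪ S :=
      vertsOf_insert_union e₀ R S hbad
    have hm : (- Real.sqrt (p / (1 - p))) * Real.sqrt ((1 - p) / p) = -1 := by
      rw [neg_mul, hsq]
    simp only [hf]
    rw [hv, Finset.card_insert_of_notMem hR, Finset.prod_insert hR, hchar, pow_succ]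
    linear_combination ((k / (n:ℝ)) ^ (vertsOf R ∪ S).card *
      (- Real.sqrt (p / (1 - p))) ^ R.card * ∏ e ∈ R, char p G e) * hm
  -- set membership is preserved by toggling e₀
  have mem_toggle : ∀ R : Finset (Sym2 (Fin n)), e₀ ∉ R →
      (((∀ e ∈ R, ¬ e.IsDiag) ∧ ConnectedToS R S ∧ (vertsOf R ∪ S).card ≤ DV) ↔
       ((∀ e ∈ insert e₀ R, ¬ e.IsDiag) ∧ ConnectedToS (insert e₀ R) S ∧
        (vertsOf (insert e₀ R) ∪ S).card ≤ DV)) := by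
    intro R hR
    have hv : vertsOf (insert e₀ R) ∪ S = vertsOf R ∪ S :=
      vertsOf_insert_union e₀ R S hbad
    constructor
    · rintro ⟨h1, h2, h3⟩
      refine ⟨?_, ?_, by rwa [hv]⟩
      · intro e he
        rcases Finset.mem_insert.mp he with rfl | he
        · exact hG _ he₀G
        · exact h1 e he
      · intro v hv'
        simp only [vertsOf, Finset.mem_filter, Finset.mem_univ, true_and,
          Finset.mem_insert] at hv'
        obtain ⟨e, (rfl | he), hve⟩ := hv'
        · exact ⟨v, hbad v hve, SimpleGraph.Reachable.refl _⟩
        · obtain ⟨s, hs, hreach⟩ := h2 v (by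
            simp only [vertsOf, Finset.mem_filter, Finset.mem_univ, true_and]
            exact ⟨e, he, hve⟩)
          refine ⟨s, hs, hreach.mono ?_⟩
          apply SimpleGraph.fromEdgeSet_mono
          intro a ha
          simp only [Finset.coe_insert, Set.mem_insert_iff]
          exact Or.inr ha
    · rintro ⟨h1, h2, h3⟩
      refine ⟨fun e he => h1 e (Finset.mem_insert_of_mem he), ?_, by rwa [hv] at h3⟩
      intro v hv'
      have hv'' : v ∈ vertsOf (insert e₀ R) :=
        vertsOf_mono (Finset.subset_insert _ _) hv'
      obtain ⟨s, hs, hreach⟩ := h2 v hv''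
      obtain ⟨w⟩ := hreach
      have herase : (insert e₀ R).erase e₀ = R := Finset.erase_insert hR
      have := reach_cases (x := x) (y := y) (R := insert e₀ R) w
      rw [he₀] at herase
      rw [herase] at this
      rcases this with h' | h' | h'
      · exact ⟨s, hs, h'⟩
      · exact ⟨x, hxS, h'⟩
      · exact ⟨y, hyS, h'⟩
  rw [Lam]
  set T := Finset.univ.filter (fun R : Finset (Sym2 (Fin n)) =>
      (∀ e ∈ R, ¬ e.IsDiag) ∧ ConnectedToS R S ∧ (vertsOf R ∪ S).card ≤ DV) with hT
  have memT : ∀ R, R ∈ T ↔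
      ((∀ e ∈ R, ¬ e.IsDiag) ∧ ConnectedToS R S ∧ (vertsOf R ∪ S).card ≤ DV) := by
    intro R; simp [hT]
  refine Finset.sum_involution
    (fun R _ => if e₀ ∈ R then R.erase e₀ else insert e₀ R) ?_ ?_ ?_ ?_
  · intro R hR
    by_cases h : e₀ ∈ R
    · simp only [h, if_true]
      have : f (insert e₀ (R.erase e₀)) = - f (R.erase e₀) :=
        key _ (Finset.notMem_erase _ _)
      rw [Finset.insert_erase h] at this
      show f R + f (R.erase e₀) = 0
      rw [this]; ring
    · simp only [h, if_false]
      show f R + f (insert e₀ R) = 0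
      rw [key R h]; ring
  · intro R hR _
    by_cases h : e₀ ∈ R
    · simp only [h, if_true]
      intro hcon
      rw [← hcon] at h
      exact Finset.notMem_erase e₀ R h
    · simp only [h, if_false]
      intro hcon
      exact h (hcon ▸ Finset.mem_insert_self e₀ R)
  · intro R hR
    by_cases h : e₀ ∈ R
    · simp only [h, if_true]
      rw [memT] at hR ⊢
      have h' : e₀ ∉ R.erase e₀ := Finset.notMem_erase _ _
      have := (mem_toggle (R.erase e₀) h').mpr
      rw [Finset.insert_erase h] at this
      exact this hR
    · simp only [h, if_false]
      rw [memT] at hR ⊢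
      exact (mem_toggle R h).mp hR
  · intro R hR
    by_cases h : e₀ ∈ R
    · simp only [h, if_true, Finset.notMem_erase, if_false]
      exact Finset.insert_erase h
    · simp only [h, if_false, Finset.mem_insert_self, if_true]
      exact Finset.erase_insert h
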